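/- arXiv:1712.04677 — 2 statements merged into one kernel-verified Lean document; each statement's English description precedes it below -/
import Mathlib

section
/- Consider the discrete-time Poisson channel W(i|x) := e^{−(x+η)}·(x+η)^i / i! for i ∈ ℕ, with bounded input alphabet 𝕏 = [0,A] (A > 0) and dark-current parameter η ≥ 0. Then for every k ∈ (0,1] and every integer M ≥ A + η, R_k(M) := ∑_{i≥M} ( sup_{x∈[0,A]} W(i|x) )^k ≤ ( α·e^{(α−1)(A+η)}·(A+η)^M / M! )^k, where α := 2^{(1/k − 1)}. In particular, the Poisson channel has a k-ordered polynomial tail (R_k(M) < ∞) for every k ∈ (0,1]. -/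
/-!
For `i ≥ A + η` the map `s ↦ e^{-s} s^i` increases on `[0, i]`, so the supremum over the input
alphabet is attained at `x = A`, and `R_k(M)` is the `k`-th power tail of the Poisson law of mean
`t = A + η`. Writing `i = M + j` and using `M! j! ≤ (M + j)!` bounds each term by
`(e^{-t} t^M / M!)^k (t^j / j!)^k`. Hölder's inequality with the geometric weights `2^{-j}` gives
`∑ a_j^k ≤ 2^{1-k} (∑ α^j a_j)^k = (α ∑ α^j a_j)^k`, because `α^k = 2^{1-k}`, and
`∑ α^j t^j / j! = e^{α t}`.
-/

open Real Finset

noncomputable def poissonMass (t : ℝ) (n : ℕ) : ℝ :=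
  exp (-t) * t ^ n / n.factorial

theorem poissonMass_nonneg {t : ℝ} (ht : 0 ≤ t) (n : ℕ) : 0 ≤ poissonMass t n := by
  unfold poissonMass
  positivity

theorem exp_neg_mul_pow_le_of_le {n : ℕ} {s u : ℝ} (hs : 0 ≤ s) (hsu : s ≤ u)
    (hun : u ≤ n) :
    exp (-s) * s ^ n ≤ exp (-u) * u ^ n := by
  rcases (hs.trans hsu).eq_or_lt with rfl | hu
  · rw [le_antisymm hsu hs]
  set r := s / u
  have hr0 : 0 ≤ r := by positivity
  have hr1 : r - 1 ≤ 0 := by rw [sub_nonpos, div_le_one hu]; exact hsu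
  -- `r ≤ e^{r - 1}`, and `n (r - 1) ≤ u (r - 1) = s - u` since `r ≤ 1`
  have hpow : r ^ n ≤ exp (s - u) := calc
    r ^ n ≤ exp (r - 1) ^ n := by gcongr; linarith [add_one_le_exp (r - 1)]
    _ = exp (n * (r - 1)) := (exp_nat_mul _ _).symm
    _ ≤ exp (u * (r - 1)) := exp_le_exp.2 (mul_le_mul_of_nonpos_right hun hr1)
    _ = exp (s - u) := by rw [mul_sub, mul_one, mul_div_cancel₀ s hu.ne']
  calc exp (-s) * s ^ n = exp (-s) * u ^ n * r ^ n := by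
        rw [mul_assoc, ← mul_pow, mul_div_cancel₀ _ hu.ne']
    _ ≤ exp (-s) * u ^ n * exp (s - u) := by gcongr
    _ = exp (-u) * u ^ n := by rw [mul_right_comm, ← exp_add]; ring_nf

theorem poissonMass_le_of_le {n : ℕ} {s u : ℝ} (hs : 0 ≤ s) (hsu : s ≤ u) (hun : u ≤ n) :
    poissonMass s n ≤ poissonMass u n :=
  div_le_div_of_nonneg_right (exp_neg_mul_pow_le_of_le hs hsu hun) (by positivity)

theorem MonotoneOn.ciSup_Icc_eq {α β : Type*} [Preorder α] [ConditionallyCompleteLattice β]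
    {f : α → β} {a b : α} (hab : a ≤ b) (hf : MonotoneOn f (Set.Icc a b)) :
    ⨆ x : Set.Icc a b, f x = f b := by
  have hb : b ∈ Set.Icc a b := Set.right_mem_Icc.2 hab
  have hle : ∀ x : Set.Icc a b, f x ≤ f b := fun x => hf x.2 hb x.2.2
  have : Nonempty (Set.Icc a b) := ⟨⟨b, hb⟩⟩
  exact le_antisymm (ciSup_le hle) (le_ciSup ⟨f b, Set.forall_mem_range.2 hle⟩ ⟨b, hb⟩)

theorem ciSup_poissonMass_Icc {A η : ℝ} (hA : 0 ≤ A) (hη : 0 ≤ η) {n : ℕ}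
    (hn : A + η ≤ n) :
    ⨆ x : Set.Icc 0 A, poissonMass (x + η) n = poissonMass (A + η) n :=
  MonotoneOn.ciSup_Icc_eq (f := fun x => poissonMass (x + η) n) hA fun _ hx _ hy hxy =>
    poissonMass_le_of_le (by linarith [hx.1]) (by linarith) (by linarith [hy.2])

theorem poissonMass_add_le {t : ℝ} (ht : 0 ≤ t) (M j : ℕ) :
    poissonMass t (j + M) ≤ poissonMass t M * (t ^ j / j.factorial) := by
  have hfac : (M.factorial * j.factorial : ℝ) ≤ (j + M).factorial := by
    rw [add_comm]
    exact_mod_cast Nat.le_of_dvd (Nat.factorial_pos _)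
      (Nat.factorial_mul_factorial_dvd_factorial_add M j)
  calc poissonMass t (j + M) = exp (-t) * t ^ (j + M) / (j + M).factorial := rfl
    _ ≤ exp (-t) * t ^ (j + M) / (M.factorial * j.factorial) := by gcongr
    _ = poissonMass t M * (t ^ j / j.factorial) := by
        unfold poissonMass
        rw [pow_add]
        field_simp

theorem sum_rpow_le_weighted {ι : Type*} (s : Finset ι) {k : ℝ} (hk0 : 0 < k) (hk1 : k ≤ 1)
    {w a : ι → ℝ} (hw : ∀ i, 0 < w i) (ha : ∀ i, 0 ≤ a i) :
    ∑ i ∈ s, a i ^ k ≤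
      (∑ i ∈ s, w i) ^ (1 - k) * (∑ i ∈ s, w i ^ (1 - k⁻¹) * a i) ^ k := by
  have holder := inner_le_weight_mul_Lp_of_nonneg s ((one_le_inv₀ hk0).2 hk1) w
    (fun i => a i ^ k / w i) (fun i => (hw i).le)
    (fun i => div_nonneg (rpow_nonneg (ha i) k) (hw i).le)
  have hprod : ∀ i, w i * (a i ^ k / w i) = a i ^ k := fun i => mul_div_cancel₀ _ (hw i).ne'
  have hpow : ∀ i, w i * (a i ^ k / w i) ^ k⁻¹ = w i ^ (1 - k⁻¹) * a i := fun i => by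
    rw [div_rpow (rpow_nonneg (ha i) k) (hw i).le, rpow_rpow_inv (ha i) hk0.ne', rpow_sub (hw i),
      rpow_one]
    ring
  simpa only [hprod, hpow, inv_inv] using holder

theorem summable_rpow_and_tsum_rpow_le {a : ℕ → ℝ} (ha : ∀ j, 0 ≤ a j) {k : ℝ}
    (hk0 : 0 < k) (hk1 : k ≤ 1) {S : ℝ}
    (hS : HasSum (fun j => ((2 : ℝ) ^ (1 / k - 1)) ^ j * a j) S) :
    Summable (fun j => a j ^ k) ∧ ∑' j, a j ^ k ≤ ((2 : ℝ) ^ (1 / k - 1) * S) ^ k := by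
  set α := (2 : ℝ) ^ (1 / k - 1)
  have hweight : ∀ j : ℕ, ((1 / 2 : ℝ) ^ j) ^ (1 - k⁻¹) = α ^ j := fun j => by
    rw [← rpow_pow_comm (by norm_num), one_div, inv_rpow (by norm_num),
      ← rpow_neg (by norm_num)]
    congr 2
    ring
  have hαk : α ^ k = 2 ^ (1 - k) := by
    rw [← rpow_mul (by norm_num)]
    congr 1
    field_simp
  have hS0 : 0 ≤ S := hS.nonneg fun j => mul_nonneg (by positivity) (ha j)
  have hbound : ∀ s : Finset ℕ, ∑ j ∈ s, a j ^ k ≤ (α * S) ^ k := fun s => calc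
    ∑ j ∈ s, a j ^ k
        ≤ (∑ j ∈ s, (1 / 2 : ℝ) ^ j) ^ (1 - k) *
            (∑ j ∈ s, ((1 / 2 : ℝ) ^ j) ^ (1 - k⁻¹) * a j) ^ k :=
      sum_rpow_le_weighted s hk0 hk1 (fun j => by positivity) ha
    _ ≤ 2 ^ (1 - k) * S ^ k := by
      have hterm : ∀ j, 0 ≤ α ^ j * a j := fun j => mul_nonneg (by positivity) (ha j)
      have hgeom : ∑ j ∈ s, (1 / 2 : ℝ) ^ j ≤ 2 :=
        sum_le_hasSum s (fun j _ => by positivity) hasSum_geometric_two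
      have hpartial : ∑ j ∈ s, α ^ j * a j ≤ S := sum_le_hasSum s (fun j _ => hterm j) hS
      have hpartial0 : 0 ≤ ∑ j ∈ s, α ^ j * a j := sum_nonneg fun j _ => hterm j
      simp only [hweight]
      gcongr
    _ = (α * S) ^ k := by rw [mul_rpow (by positivity) hS0, hαk]
  have hnonneg : 0 ≤ fun j => a j ^ k := fun j => rpow_nonneg (ha j) k
  exact ⟨summable_of_sum_le hnonneg hbound, Real.tsum_le_of_sum_le hnonneg hbound⟩

theorem hasSum_pow_mul_pow_div_factorial (α t : ℝ) :
    HasSum (fun j : ℕ => α ^ j * (t ^ j / j.factorial)) (exp (α * t)) := by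
  simpa only [exp_eq_exp_ℝ, mul_pow, mul_div_assoc] using
    NormedSpace.expSeries_div_hasSum_exp (α * t)

theorem poissonMass_tail_rpow_le {t : ℝ} (ht : 0 ≤ t) {k : ℝ} (hk0 : 0 < k) (hk1 : k ≤ 1)
    (M : ℕ) :
    Summable (fun i : ℕ => if M ≤ i then poissonMass t i ^ k else 0) ∧
      ∑' i : ℕ, (if M ≤ i then poissonMass t i ^ k else 0) ≤
        ((2 : ℝ) ^ (1 / k - 1) * exp (((2 : ℝ) ^ (1 / k - 1) - 1) * t) * t ^ M /
          M.factorial) ^ k := by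
  set α := (2 : ℝ) ^ (1 / k - 1)
  set f := fun i : ℕ => if M ≤ i then poissonMass t i ^ k else 0
  have hshift : ∀ j, f (j + M) = poissonMass t (j + M) ^ k :=
    fun j => if_pos (Nat.le_add_left M j)
  have hmass := poissonMass_nonneg ht
  obtain ⟨hsum, htsum⟩ := summable_rpow_and_tsum_rpow_le (fun j => by positivity) hk0 hk1
    (hasSum_pow_mul_pow_div_factorial α t)
  have hle : ∀ j, f (j + M) ≤ poissonMass t M ^ k * (t ^ j / j.factorial) ^ k := fun j => by
    rw [hshift, ← mul_rpow (hmass M) (by positivity)]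
    exact rpow_le_rpow (hmass _) (poissonMass_add_le ht M j) hk0.le
  have hsum' : Summable fun j => f (j + M) :=
    (hsum.mul_left _).of_nonneg_of_le (fun j => (hshift j).symm ▸ rpow_nonneg (hmass _) k) hle
  have hf : Summable f := (summable_nat_add_iff M).1 hsum'
  have hhead : ∑ i ∈ range M, f i = 0 :=
    sum_eq_zero fun i hi => if_neg (not_le.2 (mem_range.1 hi))
  refine ⟨hf, ?_⟩
  calc ∑' i, f i = ∑' j, f (j + M) := by rw [← hf.sum_add_tsum_nat_add M, hhead, zero_add]
    _ ≤ ∑' j, poissonMass t M ^ k * (t ^ j / j.factorial) ^ k :=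
      Summable.tsum_le_tsum hle hsum' (hsum.mul_left (poissonMass t M ^ k))
    _ = poissonMass t M ^ k * ∑' j, (t ^ j / j.factorial) ^ k := tsum_mul_left
    _ ≤ poissonMass t M ^ k * (α * exp (α * t)) ^ k :=
      mul_le_mul_of_nonneg_left htsum (rpow_nonneg (hmass M) k)
    _ = (α * exp ((α - 1) * t) * t ^ M / M.factorial) ^ k := by
      rw [← mul_rpow (hmass M) (by positivity)]
      congr 1
      unfold poissonMass
      rw [sub_mul, one_mul, sub_eq_add_neg, exp_add]
      ring

theorem stmt17 (A η : ℝ) (hA : 0 < A) (hη : 0 ≤ η)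
    (W : ℝ → ℕ → ℝ)
    (hW : ∀ x i, W x i = Real.exp (-(x + η)) * (x + η) ^ i / (Nat.factorial i : ℝ))
    (k : ℝ) (hk0 : 0 < k) (hk1 : k ≤ 1)
    (M : ℕ) (hM : A + η ≤ M) :
    Summable (fun i : ℕ => if M ≤ i then (⨆ x : Set.Icc (0 : ℝ) A, W x.1 i) ^ k else 0) ∧
      (∑' i : ℕ, if M ≤ i then (⨆ x : Set.Icc (0 : ℝ) A, W x.1 i) ^ k else 0) ≤
        ((2 : ℝ) ^ (1 / k - 1) *
            Real.exp (((2 : ℝ) ^ (1 / k - 1) - 1) * (A + η)) *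
            (A + η) ^ M / (Nat.factorial M : ℝ)) ^ k := by
  obtain rfl : W = fun x i => poissonMass (x + η) i := funext₂ hW
  have hsup (i : ℕ) (hi : M ≤ i) :
      ⨆ x : Set.Icc (0 : ℝ) A, poissonMass (x + η) i = poissonMass (A + η) i :=
    ciSup_poissonMass_Icc hA.le hη (hM.trans (Nat.cast_le.2 hi))
  simp +contextual only [hsup]
  exact poissonMass_tail_rpow_le (by positivity) hk0 hk1 M
end

section
/- Let K be a compact metric space, ν a Borel probability measure on K, and c : K → ℝ a bounded measurable function. Then the probability measure μ* defined by μ*(B) := ( ∫_B 2^{c(x)} ν(dx) ) / ( ∫_K 2^{c(x)} ν(dx) ) for Borel sets B ⊆ K is the unique minimizer of μ ↦ KL(μ‖ν) − ∫_K c dμ over all Borel probability measures μ on K, and the optimal value equals −log ∫_K 2^{c(x)} ν(dx). -/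
/-!
Let μ* be the tilt of ν by `2 ^ c` and `Z = ∫ 2 ^ c dν`. Since
`log₂ (dμ/dμ*) = log₂ (dμ/dν) - c + log₂ Z`, every probability measure μ satisfies
`KL(μ‖ν) - ∫ c dμ = KL(μ‖μ*) - log₂ Z`, both sides being `+∞` together.
Gibbs' inequality `KL(μ‖μ*) ≥ 0`, with equality only for `μ = μ*`, then gives minimality,
uniqueness and the optimal value at once.
-/

open MeasureTheory

open scoped Classical in
/-- Relative entropy (base-2 logarithm) of `μ` with respect to `ν`, valued in `EReal`:
`∫ log₂(dμ/dν) dμ` if `μ ≪ ν` and the integrand is `μ`-integrable, `+∞` otherwise. -/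
noncomputable def KL2 {K : Type*} [MeasurableSpace K] (μ ν : Measure K) : EReal :=
  if μ ≪ ν ∧ Integrable (fun x => Real.logb 2 ((μ.rnDeriv ν x).toReal)) μ then
    ((∫ x, Real.logb 2 ((μ.rnDeriv ν x).toReal) ∂μ : ℝ) : EReal)
  else ⊤

open Real InformationTheory

section KL2

variable {α : Type*} [MeasurableSpace α] {μ ν : Measure α}

lemma integrable_logb_rnDeriv_iff :
    Integrable (fun x => logb 2 ((μ.rnDeriv ν x).toReal)) μ ↔ Integrable (llr μ ν) μ := by
  simp only [Real.logb, div_eq_mul_inv]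
  exact integrable_mul_const_iff (isUnit_iff_ne_zero.2 (by positivity)) _

lemma KL2_of_ac_of_integrable (h1 : μ ≪ ν) (h2 : Integrable (llr μ ν) μ) :
    KL2 μ ν = (((∫ x, llr μ ν x ∂μ) / log 2 : ℝ) : EReal) := by
  rw [KL2, if_pos ⟨h1, integrable_logb_rnDeriv_iff.2 h2⟩, ← integral_div]
  rfl

lemma KL2_of_not (h : ¬(μ ≪ ν ∧ Integrable (llr μ ν) μ)) : KL2 μ ν = ⊤ := by
  rw [KL2, if_neg (by rwa [integrable_logb_rnDeriv_iff])]

lemma KL2_self (μ : Measure α) [SigmaFinite μ] : KL2 μ μ = 0 := by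
  rw [KL2_of_ac_of_integrable .rfl ((integrable_zero _ _ _).congr (llr_self μ).symm),
    integral_congr_ae (llr_self μ)]
  simp

variable [IsProbabilityMeasure μ] [IsProbabilityMeasure ν]

lemma KL2_nonneg : 0 ≤ KL2 μ ν := by
  by_cases h : μ ≪ ν ∧ Integrable (llr μ ν) μ
  · have hgibbs := integral_llr_add_sub_measure_univ_nonneg h.1 h.2
    simp only [probReal_univ, add_sub_cancel_right] at hgibbs
    rw [KL2_of_ac_of_integrable h.1 h.2]
    exact EReal.coe_nonneg.2 (div_nonneg hgibbs (log_nonneg one_le_two))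
  · simp [KL2_of_not h]

lemma KL2_eq_zero_iff : KL2 μ ν = 0 ↔ μ = ν := by
  refine ⟨fun h => ?_, fun h => h ▸ KL2_self μ⟩
  by_cases hac : μ ≪ ν ∧ Integrable (llr μ ν) μ
  · rw [KL2_of_ac_of_integrable hac.1 hac.2] at h
    have hint : ∫ x, llr μ ν x ∂μ = 0 := by
      simpa [(log_pos one_lt_two).ne'] using h
    rw [← klDiv_eq_zero_iff, klDiv_of_ac_of_integrable hac.1 hac.2, hint]
    simp
  · simp [KL2_of_not hac] at h

end KL2

section Tilted

variable {α : Type*} [MeasurableSpace α] {μ ν : Measure α}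

lemma withDensity_rpow_div_integral_eq_tilted {b : ℝ} (hb : 0 < b) (c : α → ℝ) :
    ν.withDensity (fun x => ENNReal.ofReal (b ^ (c x) / ∫ y, b ^ (c y) ∂ν)) =
      ν.tilted fun x => log b * c x := by
  simp only [Measure.tilted, rpow_def_of_pos hb]

lemma ac_and_integrable_llr_tilted_right_iff [IsFiniteMeasure μ] [SigmaFinite ν] {f : α → ℝ}
    (hfμ : Integrable f μ) (hfν : Integrable (fun x => exp (f x)) ν) :
    (μ ≪ ν.tilted f ∧ Integrable (llr μ (ν.tilted f)) μ) ↔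
      (μ ≪ ν ∧ Integrable (llr μ ν) μ) := by
  have hac : μ ≪ ν.tilted f ↔ μ ≪ ν :=
    ⟨fun h => h.trans (tilted_absolutelyContinuous ν f),
      fun h => h.trans (absolutelyContinuous_tilted hfν)⟩
  rw [hac]
  refine and_congr_right fun h => ?_
  rw [integrable_congr (llr_tilted_right h hfν)]
  exact integrable_add_iff_integrable_right'
    (f := fun x => -f x + log (∫ z, exp (f z) ∂ν)) (hfμ.neg.add (integrable_const _))

lemma KL2_sub_integral_eq_KL2_tilted_sub [IsProbabilityMeasure μ] [SigmaFinite ν] {c : α → ℝ}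
    (hcμ : Integrable c μ) (hcν : Integrable (fun x => (2 : ℝ) ^ (c x)) ν) :
    KL2 μ ν - ((∫ x, c x ∂μ : ℝ) : EReal) =
      KL2 μ (ν.tilted fun x => log 2 * c x) -
        ((logb 2 (∫ x, (2 : ℝ) ^ (c x) ∂ν) : ℝ) : EReal) := by
  simp only [rpow_def_of_pos two_pos] at hcν ⊢
  have hfμ : Integrable (fun x => log 2 * c x) μ := hcμ.const_mul _
  by_cases h : μ ≪ ν ∧ Integrable (llr μ ν) μ
  · obtain ⟨hac, hint⟩ := h
    rw [KL2_of_ac_of_integrable hac hint,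
      KL2_of_ac_of_integrable (hac.trans (absolutelyContinuous_tilted hcν))
        (integrable_llr_tilted_right hac hfμ hint hcν),
      integral_llr_tilted_right hac hfμ hcν hint, integral_const_mul,
      ← EReal.coe_sub, ← EReal.coe_sub, Real.logb]
    congr 1
    field_simp
    ring
  · rw [KL2_of_not h, KL2_of_not (by rwa [ac_and_integrable_llr_tilted_right_iff hfμ hcν]),
      EReal.top_sub_coe, EReal.top_sub_coe]

end Tilted

lemma integrable_rpow_of_abs_le {α : Type*} [MeasurableSpace α] {μ : Measure α}
    [IsFiniteMeasure μ] {b : ℝ} (hb : 1 ≤ b) {c : α → ℝ} {C : ℝ} (hc : Measurable c)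
    (hC : ∀ x, |c x| ≤ C) :
    Integrable (fun x => b ^ (c x)) μ := by
  refine .of_bound (measurable_const.pow hc).aestronglyMeasurable (b ^ C)
    (ae_of_all _ fun x => ?_)
  rw [Real.norm_of_nonneg (by positivity)]
  exact rpow_le_rpow_of_exponent_le hb (le_of_abs_le (hC x))

theorem stmt18_general {K : Type*} [MeasurableSpace K]
    (ν : Measure K) [IsProbabilityMeasure ν]
    (c : K → ℝ) (hcmeas : Measurable c) (hcbd : ∃ C, ∀ x, |c x| ≤ C)
    (μstar : Measure K)
    (hμstar : μstar =
      ν.withDensity fun x => ENNReal.ofReal ((2 : ℝ) ^ (c x) / ∫ y, (2 : ℝ) ^ (c y) ∂ν)) :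
    IsProbabilityMeasure μstar ∧
      (∀ μ : Measure K, IsProbabilityMeasure μ →
        KL2 μstar ν - ((∫ x, c x ∂μstar : ℝ) : EReal) ≤
          KL2 μ ν - ((∫ x, c x ∂μ : ℝ) : EReal)) ∧
      (∀ μ : Measure K, IsProbabilityMeasure μ →
        KL2 μ ν - ((∫ x, c x ∂μ : ℝ) : EReal) =
            KL2 μstar ν - ((∫ x, c x ∂μstar : ℝ) : EReal) →
          μ = μstar) ∧
      KL2 μstar ν - ((∫ x, c x ∂μstar : ℝ) : EReal) =
        ((-Real.logb 2 (∫ x, (2 : ℝ) ^ (c x) ∂ν) : ℝ) : EReal) := by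
  obtain ⟨C, hC⟩ := hcbd
  have h2c : Integrable (fun x => (2 : ℝ) ^ (c x)) ν :=
    integrable_rpow_of_abs_le one_le_two hcmeas hC
  rw [withDensity_rpow_div_integral_eq_tilted two_pos] at hμstar
  have hprob : IsProbabilityMeasure μstar :=
    hμstar ▸ isProbabilityMeasure_tilted (by simpa only [rpow_def_of_pos two_pos] using h2c)
  have hfree (μ : Measure K) [IsProbabilityMeasure μ] :
      KL2 μ ν - ((∫ x, c x ∂μ : ℝ) : EReal) =
        KL2 μ μstar - ((logb 2 (∫ x, (2 : ℝ) ^ (c x) ∂ν) : ℝ) : EReal) :=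
    hμstar ▸ KL2_sub_integral_eq_KL2_tilted_sub
      (.of_bound hcmeas.aestronglyMeasurable C (ae_of_all _ hC)) h2c
  refine ⟨hprob, fun μ _ => ?_, fun μ _ h => ?_, ?_⟩
  · rw [hfree, hfree, KL2_self]
    exact EReal.sub_le_sub KL2_nonneg le_rfl
  · rw [hfree, hfree, KL2_self] at h
    have h' := congrArg (· + ((logb 2 (∫ x, (2 : ℝ) ^ (c x) ∂ν) : ℝ) : EReal)) h
    simp only [EReal.sub_add_cancel] at h'
    exact KL2_eq_zero_iff.1 h'
  · rw [hfree, KL2_self, zero_sub, EReal.coe_neg]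

theorem stmt18 {K : Type*} [MetricSpace K] [CompactSpace K]
    [MeasurableSpace K] [BorelSpace K]
    (ν : Measure K) [IsProbabilityMeasure ν]
    (c : K → ℝ) (hcmeas : Measurable c) (hcbd : ∃ C, ∀ x, |c x| ≤ C)
    (μstar : Measure K)
    (hμstar : μstar =
      ν.withDensity fun x => ENNReal.ofReal ((2 : ℝ) ^ (c x) / ∫ y, (2 : ℝ) ^ (c y) ∂ν)) :
    IsProbabilityMeasure μstar ∧
      (∀ μ : Measure K, IsProbabilityMeasure μ →
        KL2 μstar ν - ((∫ x, c x ∂μstar : ℝ) : EReal) ≤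
          KL2 μ ν - ((∫ x, c x ∂μ : ℝ) : EReal)) ∧
      (∀ μ : Measure K, IsProbabilityMeasure μ →
        KL2 μ ν - ((∫ x, c x ∂μ : ℝ) : EReal) =
            KL2 μstar ν - ((∫ x, c x ∂μstar : ℝ) : EReal) →
          μ = μstar) ∧
      KL2 μstar ν - ((∫ x, c x ∂μstar : ℝ) : EReal) =
        ((-Real.logb 2 (∫ x, (2 : ℝ) ^ (c x) ∂ν) : ℝ) : EReal) :=
  stmt18_general ν c hcmeas hcbd μstar hμstar
end
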